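/- Let c, d, k ∈ ℝ with c > 0 and d² − 4ck < 0, and define f(u) = √(c u² + d u + k) and a(u) = arctan((2c/√(4ck − d²))(u + d/(2c))). Then f'(u) sin(a(u)) + f(u) a'(u) cos(a(u)) = √c for all u ∈ ℝ. -/

import Mathlib

open Real Set

/-!
The left-hand side is the derivative of `u ↦ f u * sin (a u)`, and this product is affine: with
`s = √(4ck − d²)` and `t = 2cu + d` we have `a u = arctan (t / s)`, so `sin (a u) = t / √(t² + s²)`,
while completing the square gives `t² + s² = 4c (cu² + du + k) = 4c f(u)²`. Hence
`f u * sin (a u) = (2cu + d) / (2√c)`, whose derivative is `2c / (2√c) = √c`.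
-/

lemma sin_arctan_div (t : ℝ) {s : ℝ} (hs : 0 < s) :
    sin (arctan (t / s)) = t / √(t ^ 2 + s ^ 2) := by
  rw [sin_arctan, div_pow, one_add_div (by positivity), sqrt_div' _ (sq_nonneg s),
    sqrt_sq hs.le, add_comm (s ^ 2)]
  field_simp

lemma quadratic_pos_of_discrim_neg {c d k : ℝ} (hc : 0 < c) (hΔ : d ^ 2 - 4 * c * k < 0)
    (u : ℝ) : 0 < c * u ^ 2 + d * u + k := by
  nlinarith [sq_nonneg (2 * c * u + d)]

lemma sqrt_quadratic_mul_sin_arctan {c d k : ℝ} (hc : 0 < c) (hΔ : d ^ 2 - 4 * c * k < 0)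
    (u : ℝ) :
    √(c * u ^ 2 + d * u + k) *
        sin (arctan ((2 * c / √(4 * c * k - d ^ 2)) * (u + d / (2 * c)))) =
      (2 * c * u + d) / (2 * √c) := by
  have hs : 0 < √(4 * c * k - d ^ 2) := sqrt_pos.mpr (by linarith)
  have hr : √(c * u ^ 2 + d * u + k) ≠ 0 :=
    (sqrt_pos.mpr (quadratic_pos_of_discrim_neg hc hΔ u)).ne'
  have h_arg : (2 * c / √(4 * c * k - d ^ 2)) * (u + d / (2 * c)) =
      (2 * c * u + d) / √(4 * c * k - d ^ 2) := by
    field_simp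
  have h_square : (2 * c * u + d) ^ 2 + √(4 * c * k - d ^ 2) ^ 2 =
      (2 * √c) ^ 2 * (c * u ^ 2 + d * u + k) := by
    rw [mul_pow, sq_sqrt (by linarith), sq_sqrt hc.le]
    ring
  rw [h_arg, sin_arctan_div _ hs, h_square, sqrt_mul (sq_nonneg _), sqrt_sq (by positivity),
    mul_div_assoc', mul_comm (2 * √c), mul_div_mul_left _ _ hr]

theorem stmt_8_general (c d k : ℝ) (hc : 0 < c)
    (hΔ : d ^ 2 - 4 * c * k < 0) (f A : ℝ → ℝ)
    (hf : ∀ u, f u = Real.sqrt (c * u ^ 2 + d * u + k))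
    (hA : ∀ u, A u =
      Real.arctan ((2 * c / Real.sqrt (4 * c * k - d ^ 2)) * (u + d / (2 * c)))) :
    ∀ u : ℝ,
      deriv f u * Real.sin (A u) + f u * deriv A u * Real.cos (A u) =
        Real.sqrt c := by
  intro u
  have hf_diff : DifferentiableAt ℝ f u := by
    rw [funext hf]
    exact (by fun_prop : DifferentiableAt ℝ _ u).sqrt (quadratic_pos_of_discrim_neg hc hΔ u).ne'
  have hA_diff : DifferentiableAt ℝ A u := by
    rw [funext hA]
    exact (by fun_prop : DifferentiableAt ℝ _ u).arctan
  have h_affine : (fun v => f v * sin (A v)) = fun v => (2 * c * v + d) / (2 * √c) := by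
    ext v
    rw [hf, hA, sqrt_quadratic_mul_sin_arctan hc hΔ]
  have h_deriv : HasDerivAt (fun v => f v * sin (A v)) (2 * c * 1 / (2 * √c)) u := by
    rw [h_affine]
    exact (((hasDerivAt_id' u).const_mul (2 * c)).add_const d).div_const (2 * √c)
  have h_slope : 2 * c * 1 / (2 * √c) = √c := by
    field_simp
    rw [sq_sqrt hc.le]
  have h_product := hf_diff.hasDerivAt.mul hA_diff.hasDerivAt.sin
  rw [← h_slope, ← h_product.unique h_deriv]
  ring

theorem stmt_8 (c d k : ℝ) (hc : 0 < c) (hk : 0 < k)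
    (hΔ : d ^ 2 - 4 * c * k < 0) (f A : ℝ → ℝ)
    (hf : ∀ u, f u = Real.sqrt (c * u ^ 2 + d * u + k))
    (hA : ∀ u, A u =
      Real.arctan ((2 * c / Real.sqrt (4 * c * k - d ^ 2)) * (u + d / (2 * c)))) :
    ∀ u : ℝ,
      deriv f u * Real.sin (A u) + f u * deriv A u * Real.cos (A u) =
        Real.sqrt c :=
  stmt_8_general c d k hc hΔ f A hf hA
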